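/- For every finite simple graph G on n vertices, the Thue chromatic number satisfies π(G) ≤ n − α(G) + 1, where α(G) is the independence number of G. -/

import Mathlib

/-- A list is a repetition if it is of the form `w ++ w` for a nonempty `w`. -/
def IsRepetition {α : Type*} (l : List α) : Prop := ∃ w : List α, w ≠ [] ∧ l = w ++ w

/-- A list is non-repetitive if no block of consecutive elements is a repetition. -/
def NonRepetitive {α : Type*} (l : List α) : Prop :=
  ∀ t : List α, t <:+: l → ¬ IsRepetition t

/-- A vertex colouring is non-repetitive if the colour sequence of every path
is not a repetition. -/
def NonRepColoring {V β : Type*} (G : SimpleGraph V) (φ : V → β) : Prop :=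
  ∀ ⦃u v : V⦄ (p : G.Walk u v), p.IsPath → ¬ IsRepetition (p.support.map φ)

/-- The Thue chromatic number: minimum number of colours of a non-repetitive colouring. -/
noncomputable def thueNumber {V : Type*} [Fintype V] (G : SimpleGraph V) : ℕ :=
  sInf {k | ∃ φ : V → Fin k, NonRepColoring G φ}

/-- The Thue choice number: least `k` such that from any lists of size at least `k`
one can choose a non-repetitive colouring. -/
noncomputable def thueChoiceNumber {V : Type*} [Fintype V] (G : SimpleGraph V) : ℕ :=
  sInf {k | ∀ L : V → Finset ℕ, (∀ v, k ≤ (L v).card) →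
    ∃ φ : V → ℕ, (∀ v, φ v ∈ L v) ∧ NonRepColoring G φ}

/-- The independence number of a graph. -/
noncomputable def indepNum {V : Type*} [Fintype V] (G : SimpleGraph V) : ℕ :=
  sSup {n | ∃ s : Finset V, (∀ a ∈ s, ∀ b ∈ s, ¬ G.Adj a b) ∧ s.card = n}

/-- The lexicographic product of two simple graphs. -/
def lexProd {V W : Type*} (G : SimpleGraph V) (H : SimpleGraph W) : SimpleGraph (V × W) where
  Adj x y := G.Adj x.1 y.1 ∨ (x.1 = y.1 ∧ H.Adj x.2 y.2)
  symm := by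
    constructor
    rintro x y (h | ⟨h1, h2⟩)
    · exact Or.inl h.symm
    · exact Or.inr ⟨h1.symm, h2.symm⟩
  loopless := by
    constructor
    rintro x (h | ⟨h1, h2⟩)
    · exact G.loopless.irrefl _ h
    · exact H.loopless.irrefl _ h2

/-!
Give all vertices of a maximum independent set `S` one colour and every other vertex a colour of
its own. In a repetitive colour sequence every entry recurs at another position, so on a path
(whose vertices are distinct) every vertex shares its colour with another vertex and hence lies
in `S`; but the first two vertices of the path are adjacent.
-/

theorem IsRepetition.two_le_length {α : Type*} {l : List α} (h : IsRepetition l) :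
    2 ≤ l.length := by
  obtain ⟨w, hw, rfl⟩ := h
  have := List.length_pos_iff.mpr hw
  simp only [List.length_append]
  omega

theorem IsRepetition.of_map {α β : Type*} {f : α → β} (hf : Function.Injective f) {l : List α}
    (h : IsRepetition (l.map f)) : IsRepetition l := by
  obtain ⟨w, hw, hl⟩ := h
  have hhead : (l.take w.length).map f = w := by
    rw [List.map_take, hl, List.take_left]
  have htail : (l.drop w.length).map f = w := by
    rw [List.map_drop, hl, List.drop_left]
  have hhalves : l.drop w.length = l.take w.length :=
    List.map_injective_iff.mpr hf (htail.trans hhead.symm)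
  refine ⟨l.take w.length, fun h => hw (by rw [← hhead, h, List.map_nil]), ?_⟩
  nth_rw 2 [← hhalves]
  exact (List.take_append_drop _ _).symm

/-- In a repetition `w ++ w`, position `j` carries the same entry as position `j ± |w|`. -/
theorem IsRepetition.exists_ne_getElem_eq {α : Type*} {l : List α} (h : IsRepetition l)
    {j : ℕ} (hj : j < l.length) : ∃ k, ∃ hk : k < l.length, k ≠ j ∧ l[k] = l[j] := by
  obtain ⟨w, hw, rfl⟩ := h
  have := List.length_pos_iff.mpr hw
  simp only [List.length_append] at hj
  by_cases hjw : j < w.length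
  · refine ⟨j + w.length, by simp; omega, by omega, ?_⟩
    rw [List.getElem_append_right (by omega), List.getElem_append_left hjw]
    simp
  · refine ⟨j - w.length, by simp; omega, by omega, ?_⟩
    rw [List.getElem_append_left (by omega), List.getElem_append_right (by omega)]

theorem List.Nodup.exists_ne_map_eq_of_isRepetition {α β : Type*} {f : α → β} {l : List α}
    (hl : l.Nodup) (h : IsRepetition (l.map f)) {x : α} (hx : x ∈ l) :
    ∃ y ∈ l, y ≠ x ∧ f y = f x := by
  obtain ⟨j, hj, rfl⟩ := List.getElem_of_mem hx
  obtain ⟨k, hk, hkj, hf⟩ := h.exists_ne_getElem_eq (j := j) (by simpa using hj)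
  simp only [List.length_map] at hk
  refine ⟨l[k], List.getElem_mem hk, fun h => hkj ((hl.getElem_inj_iff).mp h), ?_⟩
  simpa using hf

theorem NonRepColoring.comp_injective {V β γ : Type*} {G : SimpleGraph V} {φ : V → β}
    (hφ : NonRepColoring G φ) {f : β → γ} (hf : Function.Injective f) :
    NonRepColoring G (f ∘ φ) := fun _ _ p hp hrep =>
  hφ p hp (IsRepetition.of_map hf (by rwa [List.map_map]))

theorem thueNumber_le_card {V β : Type*} [Fintype V] [Fintype β] {G : SimpleGraph V}
    {φ : V → β} (hφ : NonRepColoring G φ) : thueNumber G ≤ Fintype.card β :=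
  Nat.sInf_le ⟨_, hφ.comp_injective (Fintype.equivFin β).injective⟩

theorem nonRepColoring_of_isIndepSet {V β : Type*} {G : SimpleGraph V} {S : Set V}
    (hS : G.IsIndepSet S) {φ : V → β} (hφ : ∀ u v, u ≠ v → φ u = φ v → u ∈ S) :
    NonRepColoring G φ := by
  intro u v p hp hrep
  have hsupp : ∀ x ∈ p.support, x ∈ S := fun x hx => by
    obtain ⟨y, -, hyx, hfyx⟩ := hp.support_nodup.exists_ne_map_eq_of_isRepetition hrep hx
    exact hφ x y hyx.symm hfyx.symm
  have hlen : 0 < p.length := by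
    have := hrep.two_le_length
    simp only [List.length_map, SimpleGraph.Walk.length_support] at this
    omega
  have hadj := p.adj_getVert_succ hlen
  exact hS (hsupp _ (p.getVert_mem_support 0)) (hsupp _ (p.getVert_mem_support 1)) hadj.ne hadj

theorem exists_isIndepSet_card_eq_indepNum {V : Type*} [Fintype V] (G : SimpleGraph V) :
    ∃ S : Finset V, G.IsIndepSet S ∧ S.card = indepNum G := by
  set sizes := {n | ∃ s : Finset V, (∀ a ∈ s, ∀ b ∈ s, ¬ G.Adj a b) ∧ s.card = n}
  have hbdd : BddAbove sizes := ⟨Fintype.card V, by rintro n ⟨s, -, rfl⟩; exact s.card_le_univ⟩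
  have hne : sizes.Nonempty := ⟨0, ∅, by simp⟩
  obtain ⟨S, hS, hcard⟩ := Nat.sSup_mem hne hbdd
  exact ⟨S, fun a ha b hb _ => hS a ha b hb, hcard⟩

/-- `π(G) ≤ n - α(G) + 1` for every graph `G` on `n` vertices. -/
theorem thueNumber_le {V : Type*} [Fintype V] (G : SimpleGraph V) :
    thueNumber G ≤ Fintype.card V - indepNum G + 1 := by
  classical
  obtain ⟨S, hS, hcard⟩ := exists_isIndepSet_card_eq_indepNum G
  let φ : V → Option {v // v ∉ S} := fun v => if h : v ∈ S then none else some ⟨v, h⟩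
  have hφ : ∀ u v, u ≠ v → φ u = φ v → u ∈ S := by
    intro u v huv heq
    by_contra hu
    by_cases hv : v ∈ S <;> simp [φ, hu, hv] at heq
    exact huv heq
  calc thueNumber G ≤ Fintype.card (Option {v // v ∉ S}) :=
        thueNumber_le_card (nonRepColoring_of_isIndepSet hS hφ)
    _ = Fintype.card V - indepNum G + 1 := by
        rw [Fintype.card_option, Fintype.card_subtype_compl, Fintype.card_coe, hcard]
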